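/- Let F be an equivalence relation on X = (2^ω)^ω containing 𝔽₂ (equality of countable sets of reals), with F having the Baire property. If the set {(x,y) ∈ X² : x F (x ⊕ y)} is non-meager, then F has a comeager equivalence class. -/
import Mathlib

open Set

section Helpers

open Filter Topology TopologicalSpace

variable {α β : Type*} [TopologicalSpace α] [TopologicalSpace β]

/-- Nonempty open sets in a Baire space are nonmeager. -/
lemma isOpen_not_isMeagre [BaireSpace α] {U : Set α} (hU : IsOpen U) (hne : U.Nonempty) :
    ¬ IsMeagre U := by
  intro h
  have hd : Dense Uᶜ := dense_of_mem_residual h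
  obtain ⟨x, hx, hx'⟩ := hd.inter_open_nonempty U hU hne
  exact hx' hx

/-- One direction of the Kuratowski–Ulam theorem: if `M` is meager in `α × β` with `β`
second countable, then residually many sections of `M` are meager. -/
lemma ku [SecondCountableTopology β] {M : Set (α × β)} (hM : IsMeagre M) :
    {x : α | IsMeagre (Prod.mk x ⁻¹' M)} ∈ residual α := by
  rw [IsMeagre] at hM
  obtain ⟨S, hSo, hSd, hSc, hSsub⟩ := mem_residual_iff.mp hM
  set B := countableBasis β with hBdef
  have hB : IsTopologicalBasis B := isBasis_countableBasis β
  set u : Set (α × β) → Set β → Set α := fun t V => {x : α | ∃ y ∈ V, (x, y) ∈ t} with hu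
  have hopen : ∀ t ∈ S, ∀ V ∈ B, IsOpen (u t V) := by
    intro t ht V _
    have : u t V = ⋃ y ∈ V, (fun x => (x, y)) ⁻¹' t := by
      ext x; simp [hu]
    rw [this]
    exact isOpen_biUnion fun y _ =>
      (hSo t ht).preimage (continuous_id.prodMk continuous_const)
  have hdense : ∀ t ∈ S, ∀ V ∈ B, V.Nonempty → Dense (u t V) := by
    intro t ht V hV hVne
    rw [dense_iff_inter_open]
    intro w hw hwne
    obtain ⟨⟨a, b⟩, hab⟩ := dense_iff_inter_open.mp (hSd t ht) (w ×ˢ V)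
      (hw.prod (hB.isOpen hV)) (hwne.prod hVne)
    exact ⟨a, hab.1.1, b, hab.1.2, hab.2⟩
  have hR : (⋂ t ∈ S, ⋂ V ∈ {V ∈ B | V.Nonempty}, u t V) ∈ residual α := by
    refine (countable_bInter_mem hSc).mpr fun t ht => ?_
    refine (countable_bInter_mem ((countable_countableBasis β).mono (sep_subset _ _))).mpr ?_
    rintro V ⟨hVB, hVne⟩
    exact residual_of_dense_open (hopen t ht V hVB) (hdense t ht V hVB hVne)
  refine mem_of_superset hR ?_
  intro x hx
  simp only [mem_iInter] at hx
  rw [mem_setOf_eq, IsMeagre]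
  have : (⋂ t ∈ S, Prod.mk x ⁻¹' t) ∈ residual β := by
    refine (countable_bInter_mem hSc).mpr fun t ht => ?_
    refine residual_of_dense_open ((hSo t ht).preimage (Continuous.prodMk_right x)) ?_
    rw [hB.dense_iff]
    intro V hV hVne
    obtain ⟨y, hyV, hyt⟩ := hx t ht V ⟨hV, hVne⟩
    exact ⟨y, hyV, hyt⟩
  refine mem_of_superset this ?_
  intro y hy
  simp only [mem_iInter] at hy
  exact fun hyM => hSsub (mem_sInter.mpr fun t ht => hy t ht) hyM

/-- Preimage of a residual set under a homeomorphism is residual. -/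
lemma residual_preimage (h : α ≃ₜ β) {s : Set β} (hs : s ∈ residual β) :
    h ⁻¹' s ∈ residual α :=
  tendsto_residual_of_isOpenMap h.continuous h.isOpenMap hs

end Helpers

/-- Interleaving of two sequences: (x ⊕ y)(2k) = x(k), (x ⊕ y)(2k+1) = y(k). -/
def oplus {α : Type*} (x y : ℕ → α) : ℕ → α :=
  fun j => if j % 2 = 0 then x (j / 2) else y (j / 2)

lemma range_oplus {α : Type*} (x y : ℕ → α) :
    Set.range (oplus x y) = Set.range x ∪ Set.range y := by
  apply subset_antisymm
  · rintro a ⟨j, rfl⟩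
    unfold oplus
    split_ifs
    · exact Or.inl ⟨j / 2, rfl⟩
    · exact Or.inr ⟨j / 2, rfl⟩
  · rintro a (⟨k, rfl⟩ | ⟨k, rfl⟩)
    · refine ⟨2 * k, ?_⟩
      unfold oplus
      rw [if_pos (by omega), (by omega : 2 * k / 2 = k)]
    · refine ⟨2 * k + 1, ?_⟩
      unfold oplus
      rw [if_neg (by omega), (by omega : (2 * k + 1) / 2 = k)]

section Shuffle

variable {α : Type*} [TopologicalSpace α]

/-- The underlying function of the shuffle: copy the first `m` values of `y`, then
interleave the rest of `y` with all of `x`. -/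
def shufFun (m : ℕ) (p : (ℕ → α) × (ℕ → α)) : ℕ → α :=
  fun j => if j < m then p.2 j
    else if (j - m) % 2 = 0 then p.1 ((j - m) / 2) else p.2 (m + (j - m) / 2)

/-- The shuffle homeomorphism. -/
def shuffle (m : ℕ) : ((ℕ → α) × (ℕ → α)) ≃ₜ (ℕ → α) where
  toFun := shufFun m
  invFun b := (fun k => b (m + 2 * k), fun i => if i < m then b i else b (m + 2 * (i - m) + 1))
  left_inv := by
    rintro ⟨x, y⟩
    refine Prod.ext (funext fun k => ?_) (funext fun i => ?_)
    · show shufFun m (x, y) (m + 2 * k) = x k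
      unfold shufFun
      have e1 : m + 2 * k - m = 2 * k := by omega
      rw [if_neg (by omega), e1, if_pos (by omega), (by omega : 2 * k / 2 = k)]
    · show (if i < m then shufFun m (x, y) i else shufFun m (x, y) (m + 2 * (i - m) + 1)) = y i
      unfold shufFun
      by_cases h : i < m
      · rw [if_pos h, if_pos h]
      · rw [if_neg h]
        have e1 : m + 2 * (i - m) + 1 - m = 2 * (i - m) + 1 := by omega
        rw [if_neg (by omega), e1, if_neg (by omega),
          (by omega : m + (2 * (i - m) + 1) / 2 = i)]
  right_inv := by
    intro b
    funext j
    show shufFun m (_, _) j = b j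
    unfold shufFun
    by_cases h : j < m
    · rw [if_pos h]
      exact if_pos h
    · rw [if_neg h]
      by_cases h2 : (j - m) % 2 = 0
      · rw [if_pos h2]
        show b (m + 2 * ((j - m) / 2)) = b j
        congr 1
        omega
      · rw [if_neg h2]
        show (if m + (j - m) / 2 < m then b _ else b (m + 2 * (m + (j - m) / 2 - m) + 1)) = b j
        rw [if_neg (by omega)]
        congr 1
        omega
  continuous_toFun := continuous_pi fun j => by
    unfold shufFun
    split_ifs
    · exact (continuous_apply j).comp continuous_snd
    · exact (continuous_apply _).comp continuous_fst
    · exact (continuous_apply _).comp continuous_snd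
  continuous_invFun := by
    refine Continuous.prodMk (continuous_pi fun k => continuous_apply _)
      (continuous_pi fun i => ?_)
    split_ifs
    · exact continuous_apply _
    · exact continuous_apply _

lemma shuffle_apply_lt (m : ℕ) (p : (ℕ → α) × (ℕ → α)) {j : ℕ} (h : j < m) :
    shuffle m p j = p.2 j := if_pos h

lemma range_shuffle (m : ℕ) (p : (ℕ → α) × (ℕ → α)) :
    Set.range (shuffle m p) = Set.range p.1 ∪ Set.range p.2 := by
  apply subset_antisymm
  · rintro a ⟨j, rfl⟩
    show shufFun m p j ∈ _
    unfold shufFun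
    split_ifs
    · exact Or.inr ⟨j, rfl⟩
    · exact Or.inl ⟨_, rfl⟩
    · exact Or.inr ⟨_, rfl⟩
  · rintro a (⟨k, rfl⟩ | ⟨i, rfl⟩)
    · refine ⟨m + 2 * k, ?_⟩
      show shufFun m p _ = _
      unfold shufFun
      have e1 : m + 2 * k - m = 2 * k := by omega
      rw [if_neg (by omega), e1, if_pos (by omega), (by omega : 2 * k / 2 = k)]
    · by_cases h : i < m
      · exact ⟨i, if_pos h⟩
      · refine ⟨m + 2 * (i - m) + 1, ?_⟩
        show shufFun m p _ = _
        unfold shufFun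
        have e1 : m + 2 * (i - m) + 1 - m = 2 * (i - m) + 1 := by omega
        rw [if_neg (by omega), e1, if_neg (by omega),
          (by omega : m + (2 * (i - m) + 1) / 2 = i)]

end Shuffle

abbrev XX : Type := ℕ → (ℕ → Bool)

instance : BaireSpace (XX × XX) := BaireSpace.of_t2Space_locallyCompactSpace

/-- Generalized cylinder: constraints on coordinates `g 0, ..., g (n-1)`. -/
def cylg (n : ℕ) (g : ℕ → ℕ) (B : ℕ → Set (ℕ → Bool)) : Set XX :=
  {x : XX | ∀ i < n, x (g i) ∈ B i}

lemma isOpen_cylg (n : ℕ) (g : ℕ → ℕ) {B : ℕ → Set (ℕ → Bool)} (hB : ∀ i, IsOpen (B i)) :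
    IsOpen (cylg n g B) := by
  have : cylg n g B = ⋂ i ∈ Finset.range n, (fun x : XX => x (g i)) ⁻¹' B i := by
    ext x
    simp [cylg, Finset.mem_range]
  rw [this]
  exact isOpen_biInter_finset fun i _ => (hB i).preimage (continuous_apply (g i))

/-- Every open set of `XX` containing a point contains a cylinder around it. -/
lemma cyl_basis {u : Set XX} (hu : IsOpen u) {p : XX} (hp : p ∈ u) :
    ∃ (n : ℕ) (B : ℕ → Set (ℕ → Bool)), (∀ i, IsOpen (B i)) ∧ (∀ i, (B i).Nonempty) ∧
      p ∈ cylg n id B ∧ cylg n id B ⊆ u := by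
  obtain ⟨I, w, hw, hsub⟩ := isOpen_pi_iff.mp hu p hp
  refine ⟨I.sup id + 1, fun i => if i ∈ I then w i else univ, ?_, ?_, ?_, ?_⟩
  · intro i
    dsimp only
    split_ifs with h
    · exact (hw i h).1
    · exact isOpen_univ
  · intro i
    dsimp only
    split_ifs with h
    · exact ⟨p i, (hw i h).2⟩
    · exact ⟨fun _ => true, mem_univ _⟩
  · intro i _
    dsimp only [id]
    split_ifs with h
    · exact (hw i h).2
    · exact mem_univ _
  · intro x hx
    refine hsub fun i hi => ?_
    have h1 : i < I.sup id + 1 := Nat.lt_succ_of_le (Finset.le_sup (f := id) hi)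
    have := hx i h1
    dsimp only at this
    rwa [if_pos (Finset.mem_coe.mp hi)] at this

/-- Homeomorphism of `XX` induced by an involutive map on indices. -/
def permHomeo (σ : ℕ → ℕ) (hσ : ∀ j, σ (σ j) = j) : XX ≃ₜ XX where
  toFun x := fun j => x (σ j)
  invFun x := fun j => x (σ j)
  left_inv x := funext fun j => by show x (σ (σ j)) = x j; rw [hσ j]
  right_inv x := funext fun j => by show x (σ (σ j)) = x j; rw [hσ j]
  continuous_toFun := continuous_pi fun j => continuous_apply (σ j)
  continuous_invFun := continuous_pi fun j => continuous_apply (σ j)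

lemma range_permHomeo (σ : ℕ → ℕ) (hσ : ∀ j, σ (σ j) = j) (x : XX) :
    Set.range (permHomeo σ hσ x) = Set.range x := by
  have hsurj : Function.Surjective σ := fun j => ⟨σ j, hσ j⟩
  exact hsurj.range_comp x

/-- The swap of the first two coordinates in a triple. -/
def tau : (XX × (XX × XX)) ≃ₜ (XX × (XX × XX)) where
  toFun p := (p.2.1, (p.1, p.2.2))
  invFun p := (p.2.1, (p.1, p.2.2))
  left_inv := fun ⟨a, b, c⟩ => rfl
  right_inv := fun ⟨a, b, c⟩ => rfl
  continuous_toFun := by fun_prop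
  continuous_invFun := by fun_prop

theorem stmt11 (F : XX → XX → Prop)
    (hF : Equivalence F)
    (hBP : BaireMeasurableSet {p : XX × XX | F p.1 p.2})
    (hBP2 : BaireMeasurableSet {p : XX × XX | F p.1 (oplus p.1 p.2)})
    (hSub : ∀ x y : XX, Set.range x = Set.range y → F x y)
    (hNM : ¬ IsMeagre {p : XX × XX | F p.1 (oplus p.1 p.2)}) :
    ∃ y : XX, {x : XX | F x y} ∈ residual XX := by
  classical
  set W₂ : Set (XX × XX) := {p : XX × XX | F p.1 (oplus p.1 p.2)} with hW₂def
  obtain ⟨O, hOopen, hOeq⟩ := hBP2.residualEq_isOpen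
  have hZ : {p : XX × XX | p ∈ W₂ ↔ p ∈ O} ∈ residual (XX × XX) := by
    have := Filter.eventuallyEq_set.mp hOeq
    exact this
  have hZc : IsMeagre {p : XX × XX | p ∈ W₂ ↔ p ∈ O}ᶜ := by
    rw [IsMeagre, compl_compl]
    exact hZ
  -- O is nonempty
  have hOne : O.Nonempty := by
    rcases eq_empty_or_nonempty O with h | h
    · exfalso
      apply hNM
      refine hZc.mono fun p hp => ?_
      simp only [mem_compl_iff, mem_setOf_eq, h, mem_empty_iff_false, iff_false, not_not]
      exact hp
    · exact h
  obtain ⟨p₀, hp₀⟩ := hOne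
  obtain ⟨u, v, hu, hv, hup, hvp, huv⟩ := isOpen_prod_iff.mp hOopen p₀.1 p₀.2 hp₀
  obtain ⟨n, BU, hBUopen, hBUne, hpU, hUu⟩ := cyl_basis hu hup
  obtain ⟨m, C, hCopen, hCne, hqV, hVv⟩ := cyl_basis hv hvp
  set U : Set XX := cylg n id BU with hUdef
  set V : Set XX := cylg m id C with hVdef
  have hUopen : IsOpen U := isOpen_cylg n id hBUopen
  have hVopen : IsOpen V := isOpen_cylg m id hCopen
  have hUne : U.Nonempty := ⟨p₀.1, hpU⟩
  have hVne : V.Nonempty := ⟨p₀.2, hqV⟩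
  -- the meager "bad" set in the box
  set N : Set (XX × XX) := (U ×ˢ V) \ W₂ with hNdef
  have hN : IsMeagre N := by
    refine hZc.mono fun p hp => ?_
    simp only [mem_compl_iff, mem_setOf_eq]
    intro hiff
    exact hp.2 (hiff.mpr (huv ⟨hUu hp.1.1, hVv hp.1.2⟩))
  -- shuffled versions
  set φ : (XX × XX) ≃ₜ XX := shuffle m with hφdef
  set Ψ₁ : (XX × (XX × XX)) ≃ₜ (XX × XX) := (Homeomorph.refl XX).prodCongr φ with hΨ₁def
  set Ψ₂ : (XX × (XX × XX)) ≃ₜ (XX × XX) := tau.trans Ψ₁ with hΨ₂def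
  set N₁ : Set (XX × (XX × XX)) := Ψ₁ ⁻¹' N with hN₁def
  set N₂ : Set (XX × (XX × XX)) := Ψ₂ ⁻¹' N with hN₂def
  have hN₁ : IsMeagre N₁ := hN.preimage_of_isOpenMap Ψ₁.continuous Ψ₁.isOpenMap
  have hN₂ : IsMeagre N₂ := hN.preimage_of_isOpenMap Ψ₂.continuous Ψ₂.isOpenMap
  have hΨ₁app : ∀ x x' y : XX, Ψ₁ (x, (x', y)) = (x, φ (x', y)) := fun _ _ _ => rfl
  have hΨ₂app : ∀ x x' y : XX, Ψ₂ (x, (x', y)) = (x', φ (x, y)) := fun _ _ _ => rfl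
  have hφV : ∀ (a y : XX), y ∈ V → φ (a, y) ∈ V := by
    intro a y hy i hi
    have := shuffle_apply_lt m (a, y) hi
    rw [hφdef]
    show shuffle m (a, y) (id i) ∈ C i
    simp only [id_eq]
    rw [this]
    exact hy i hi
  -- the key linking fact
  have key : ∀ x x' y : XX, x ∈ U → x' ∈ U → y ∈ V →
      (x, (x', y)) ∉ N₁ → (x, (x', y)) ∉ N₂ → F x x' := by
    intro x x' y hx hx' hy h1 h2
    have hw1 : (x, φ (x', y)) ∈ W₂ := by
      by_contra hcon
      apply h1
      rw [hN₁def, mem_preimage, hΨ₁app]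
      exact ⟨⟨hx, hφV x' y hy⟩, hcon⟩
    have hw2 : (x', φ (x, y)) ∈ W₂ := by
      by_contra hcon
      apply h2
      rw [hN₂def, mem_preimage, hΨ₂app]
      exact ⟨⟨hx', hφV x y hy⟩, hcon⟩
    have hr : F (oplus x (φ (x', y))) (oplus x' (φ (x, y))) := by
      apply hSub
      rw [range_oplus, range_oplus, hφdef]
      rw [show ⇑(shuffle m (α := ℕ → Bool)) = ⇑(shuffle m (α := ℕ → Bool)) from rfl]
      rw [range_shuffle m (x', y), range_shuffle m (x, y)]
      ext a
      simp only [mem_union]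
      tauto
    exact hF.trans (hF.trans hw1 hr) (hF.symm hw2)
  -- choose x'₀
  have hN₁₂ : IsMeagre (N₁ ∪ N₂) := by
    rw [IsMeagre, compl_union]
    exact Filter.inter_mem hN₁ hN₂
  have hM₀ : IsMeagre (⇑tau ⁻¹' (N₁ ∪ N₂)) :=
    hN₁₂.preimage_of_isOpenMap tau.continuous tau.isOpenMap
  have hR₁ := ku hM₀
  obtain ⟨O₂, hO₂open, hO₂eq⟩ := hBP.residualEq_isOpen
  have hZ₂ : {p : XX × XX | p ∈ {p : XX × XX | F p.1 p.2} ↔ p ∈ O₂} ∈ residual (XX × XX) :=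
    Filter.eventuallyEq_set.mp hO₂eq
  set Z₂c : Set (XX × XX) := {p : XX × XX | p ∈ {p : XX × XX | F p.1 p.2} ↔ p ∈ O₂}ᶜ
    with hZ₂cdef
  have hZ₂c : IsMeagre Z₂c := by
    rw [IsMeagre, compl_compl]
    exact hZ₂
  set sw : (XX × XX) ≃ₜ (XX × XX) := Homeomorph.prodComm XX XX with hswdef
  have hZ₂' : IsMeagre (⇑sw ⁻¹' Z₂c) :=
    hZ₂c.preimage_of_isOpenMap sw.continuous sw.isOpenMap
  have hR₂ := ku hZ₂'
  obtain ⟨x'₀, hx'₀U, hx'₀1, hx'₀2⟩ :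
      ∃ x'₀, x'₀ ∈ U ∧ IsMeagre (Prod.mk x'₀ ⁻¹' (⇑tau ⁻¹' (N₁ ∪ N₂))) ∧
        IsMeagre (Prod.mk x'₀ ⁻¹' (⇑sw ⁻¹' Z₂c)) := by
    have hd := dense_of_mem_residual (Filter.inter_mem hR₁ hR₂)
    obtain ⟨z, hzU, hz1, hz2⟩ := hd.inter_open_nonempty U hUopen hUne
    exact ⟨z, hzU, hz1, hz2⟩
  -- residually many x are related to x'₀
  have hR₃ := ku hx'₀1
  have hUS : ∀ x, x ∈ U → IsMeagre (Prod.mk x ⁻¹' (Prod.mk x'₀ ⁻¹' (⇑tau ⁻¹' (N₁ ∪ N₂)))) →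
      F x x'₀ := by
    intro x hxU hxm
    have hnot : ¬ V ⊆ Prod.mk x ⁻¹' (Prod.mk x'₀ ⁻¹' (⇑tau ⁻¹' (N₁ ∪ N₂))) := by
      intro hsub
      exact isOpen_not_isMeagre hVopen hVne (hxm.mono hsub)
    obtain ⟨y, hyV, hyM⟩ := not_subset.mp hnot
    have h12 : (x, (x'₀, y)) ∉ N₁ ∪ N₂ := hyM
    exact key x x'₀ y hxU hx'₀U hyV (fun h => h12 (Or.inl h)) (fun h => h12 (Or.inr h))
  -- the open set approximating the class of x'₀
  set O' : Set XX := (fun x => (x, x'₀)) ⁻¹' O₂ with hO'def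
  have hO'open : IsOpen O' := hO₂open.preimage (continuous_id.prodMk continuous_const)
  set Z₃ : Set XX := (Prod.mk x'₀ ⁻¹' (⇑sw ⁻¹' Z₂c))ᶜ with hZ₃def
  have hZ₃ : Z₃ ∈ residual XX := hx'₀2
  have hZ₃iff : ∀ x, x ∈ Z₃ → (F x x'₀ ↔ x ∈ O') := by
    intro x hx
    have : (x, x'₀) ∉ Z₂c := hx
    rw [hZ₂cdef, mem_compl_iff, not_not] at this
    exact this
  -- the class of x'₀ is dense: transfer by coordinate permutations
  have hO'dense : Dense O' := by
    rw [dense_iff_inter_open]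
    intro Bop hBop hBopne
    obtain ⟨q, hq⟩ := hBopne
    obtain ⟨n', B', hB'open, hB'ne, hqcyl, hcylB⟩ := cyl_basis hBop hq
    set Nb : ℕ := n' + n with hNbdef
    set σ : ℕ → ℕ := fun j => if j < n then Nb + j
      else if Nb ≤ j ∧ j < Nb + n then j - Nb else j with hσdef
    have hσ : ∀ j, σ (σ j) = j := by
      intro j
      simp only [hσdef]
      split_ifs <;> omega
    set hperm : XX ≃ₜ XX := permHomeo σ hσ with hpermdef
    set B₁ : Set XX := cylg n' id B' ∩ cylg n (fun i => Nb + i) BU with hB₁def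
    have hB₁open : IsOpen B₁ :=
      (isOpen_cylg n' id hB'open).inter (isOpen_cylg n (fun i => Nb + i) hBUopen)
    have hB₁ne : B₁.Nonempty := by
      refine ⟨fun j => if Nb ≤ j ∧ j < Nb + n then p₀.1 (j - Nb) else q j, ?_, ?_⟩
      · intro i hi
        dsimp only [id]
        rw [if_neg (by omega)]
        exact hqcyl i hi
      · intro i hi
        dsimp only
        rw [if_pos (by omega), (by omega : Nb + i - Nb = i)]
        exact hpU i hi
    have hpermU : ∀ x, x ∈ B₁ → hperm x ∈ U := by
      intro x hx i hi
      show x (σ (id i)) ∈ BU i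
      have : σ (id i) = Nb + i := by
        simp only [hσdef, id]
        rw [if_pos hi]
      rw [this]
      exact hx.2 i hi
    have hsubS : ∀ x, x ∈ B₁ → hperm x ∈ {x | IsMeagre (Prod.mk x ⁻¹'
        (Prod.mk x'₀ ⁻¹' (⇑tau ⁻¹' (N₁ ∪ N₂))))} → F x x'₀ := by
      intro x hx hxh
      have h1 : F (hperm x) x'₀ := hUS (hperm x) (hpermU x hx) hxh
      have h2 : F x (hperm x) := hSub _ _ (range_permHomeo σ hσ x).symm
      exact hF.trans h2 h1
    have hres : (⇑hperm ⁻¹' {x | IsMeagre (Prod.mk x ⁻¹'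
        (Prod.mk x'₀ ⁻¹' (⇑tau ⁻¹' (N₁ ∪ N₂))))}) ∩ Z₃ ∈ residual XX :=
      Filter.inter_mem (residual_preimage hperm hR₃) hZ₃
    obtain ⟨x, hxB₁, hxh, hxZ₃⟩ :=
      (dense_of_mem_residual hres).inter_open_nonempty B₁ hB₁open hB₁ne
    refine ⟨x, hcylB hxB₁.1, ?_⟩
    exact (hZ₃iff x hxZ₃).mp (hsubS x hxB₁ hxh)
  -- conclusion
  refine ⟨x'₀, ?_⟩
  have hO'res : O' ∈ residual XX := residual_of_dense_open hO'open hO'dense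
  refine Filter.mem_of_superset (Filter.inter_mem hO'res hZ₃) ?_
  rintro x ⟨hxO', hxZ⟩
  exact (hZ₃iff x hxZ).mpr hxO'
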